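/- Let 0 < a < b be reals, and let p, q > 1 with 1/p + 1/q = 1. Then |ln((a+b)/2) - ( (b ln b - a ln a)/(b-a) - 1 )| ≤ ((b-a)²/16)(1/(p+1))^{1/p}(1/(2(q+2)))^{1/q} [ ( b^{-2q} + ((q+3)/(q+1)) a^{-2q} )^{1/q} + ( ((q+3)/(q+1)) b^{-2q} + a^{-2q} )^{1/q} ]. -/

import Mathlib

/-!
Since `log'' x = -x⁻²`, Taylor's formula with integral remainder at the midpoint `A = (a+b)/2`,
averaged over `[a, b]`, gives with `h = (b - a)/2`
`log A - log I(a,b) = (∫₀ʰ t²/(a+t)² dt + ∫₀ʰ t²/(b-t)² dt) / (2(b - a))`.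
Writing each integrand as `t · (t g(t))`, Hölder's inequality splits off `∫₀ʰ tᵖ`; since
`x ↦ x^(-2q)` is convex, `g(t)^q = x^(-2q)` is at most its secant over `[a, b]`, which leaves
polynomial integrals in `t`.
-/

open Real MeasureTheory Set intervalIntegral

theorem hasDerivAt_sub_mul_log_sub_mul_inv (c : ℝ) {x : ℝ} (hx : x ≠ 0) :
    HasDerivAt (fun y ↦ y - 2 * c * log y - c ^ 2 * y⁻¹) ((x - c) ^ 2 * (x ^ 2)⁻¹) x := by
  refine (((hasDerivAt_id' x).sub ((hasDerivAt_log hx).const_mul (2 * c))).sub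
    ((hasDerivAt_inv hx).const_mul (c ^ 2))).congr_deriv ?_
  field_simp
  ring

theorem integral_sq_sub_mul_inv_sq (c : ℝ) {s t : ℝ} (hs : 0 < s) (ht : 0 < t) :
    ∫ x in s..t, (x - c) ^ 2 * (x ^ 2)⁻¹
      = (t - 2 * c * log t - c ^ 2 * t⁻¹) - (s - 2 * c * log s - c ^ 2 * s⁻¹) := by
  have hpos : ∀ x ∈ uIcc s t, x ≠ 0 := fun x hx ↦
    (lt_of_lt_of_le (lt_min hs ht) hx.1).ne'
  refine integral_eq_sub_of_hasDerivAt
    (fun x hx ↦ hasDerivAt_sub_mul_log_sub_mul_inv c (hpos x hx))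
    (ContinuousOn.intervalIntegrable ?_)
  exact (continuousOn_id.sub continuousOn_const).pow 2 |>.mul
    ((continuousOn_id.pow 2).inv₀ fun x hx ↦ pow_ne_zero 2 (hpos x hx))

theorem log_mean_sub_log_identric_eq {a b : ℝ} (ha : 0 < a) (hab : a < b) :
    log ((a + b) / 2) - ((b * log b - a * log a) / (b - a) - 1)
      = ((∫ t in 0..(b - a) / 2, t ^ 2 * ((a + t) ^ 2)⁻¹)
          + ∫ t in 0..(b - a) / 2, t ^ 2 * ((b - t) ^ 2)⁻¹) / (2 * (b - a)) := by
  have hleft : ∫ t in 0..(b - a) / 2, t ^ 2 * ((a + t) ^ 2)⁻¹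
      = ∫ x in a..(a + b) / 2, (x - a) ^ 2 * (x ^ 2)⁻¹ := by
    have := integral_comp_add_left (fun x ↦ (x - a) ^ 2 * (x ^ 2)⁻¹) a
      (a := 0) (b := (b - a) / 2)
    simp only [add_sub_cancel_left] at this
    rw [this]
    congr 1 <;> ring
  have hright : ∫ t in 0..(b - a) / 2, t ^ 2 * ((b - t) ^ 2)⁻¹
      = ∫ x in (a + b) / 2..b, (x - b) ^ 2 * (x ^ 2)⁻¹ := by
    have := integral_comp_sub_left (fun x ↦ (x - b) ^ 2 * (x ^ 2)⁻¹) b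
      (a := 0) (b := (b - a) / 2)
    simp only [sub_sub_cancel_left, neg_sq] at this
    rw [this]
    congr 1 <;> ring
  have hm : 0 < (a + b) / 2 := by linarith
  rw [hleft, hright, integral_sq_sub_mul_inv_sq a ha hm,
    integral_sq_sub_mul_inv_sq b hm (ha.trans hab)]
  have : b - a ≠ 0 := (sub_pos.2 hab).ne'
  have : a + b ≠ 0 := by linarith
  field_simp
  ring

theorem convexOn_rpow_neg {s : ℝ} (hs : 1 ≤ s) : ConvexOn ℝ (Ioi 0) fun x : ℝ ↦ x ^ (-s) := by
  have hinv : ConvexOn ℝ (Ioi 0) fun x : ℝ ↦ x⁻¹ := by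
    simpa using convexOn_zpow (𝕜 := ℝ) (-1)
  refine ⟨convex_Ioi 0, fun x hx y hy α β hα hβ hαβ ↦ ?_⟩
  have hz : 0 < α • x + β • y := convex_Ioi 0 hx hy hα hβ hαβ
  simp only [smul_eq_mul, mem_Ioi] at *
  rw [rpow_neg hx.le, rpow_neg hy.le, rpow_neg hz.le, ← inv_rpow hx.le, ← inv_rpow hy.le,
    ← inv_rpow hz.le]
  calc (α * x + β * y)⁻¹ ^ s ≤ (α * x⁻¹ + β * y⁻¹) ^ s :=
        rpow_le_rpow (inv_nonneg.2 hz.le) (by simpa using hinv.2 hx hy hα hβ hαβ) (by linarith)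
    _ ≤ α * x⁻¹ ^ s + β * y⁻¹ ^ s := by
        simpa using (convexOn_rpow hs).2 (inv_nonneg.2 hx.le) (inv_nonneg.2 hy.le) hα hβ hαβ

theorem ConvexOn.le_secant {s : Set ℝ} {f : ℝ → ℝ} (hf : ConvexOn ℝ s f) {a b x : ℝ}
    (ha : a ∈ s) (hb : b ∈ s) (hab : a < b) (hx : x ∈ Icc a b) :
    f x ≤ ((b - x) * f a + (x - a) * f b) / (b - a) := by
  have hba : b - a ≠ 0 := (sub_pos.2 hab).ne'
  have key := hf.2 ha hb (div_nonneg (sub_nonneg.2 hx.2) (sub_pos.2 hab).le)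
    (div_nonneg (sub_nonneg.2 hx.1) (sub_pos.2 hab).le)
    (show (b - x) / (b - a) + (x - a) / (b - a) = 1 by field_simp; ring)
  have hpt : ((b - x) / (b - a)) • a + ((x - a) / (b - a)) • b = x := by
    simp only [smul_eq_mul]; field_simp; ring
  rw [hpt] at key
  refine key.trans_eq ?_
  simp only [smul_eq_mul]
  field_simp

theorem inv_sq_rpow {x : ℝ} (hx : 0 ≤ x) (q : ℝ) : ((x ^ 2)⁻¹) ^ q = x ^ (-(2 * q)) := by
  rw [inv_rpow (sq_nonneg x), ← rpow_natCast, ← rpow_mul hx, rpow_neg hx]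
  norm_num

theorem ContinuousOn.memLp_restrict_Ioc {f : ℝ → ℝ} {a b : ℝ} (hf : ContinuousOn f (Icc a b))
    (r : ENNReal) : MemLp f r (volume.restrict (Ioc a b)) := by
  obtain ⟨C, hC⟩ := isCompact_Icc.exists_bound_of_continuousOn hf
  have hmeas :=
    (hf.mono Ioc_subset_Icc_self).aestronglyMeasurable (μ := volume) measurableSet_Ioc
  refine memLp_top_of_bound hmeas C ?_ |>.mono_exponent le_top
  filter_upwards [ae_restrict_mem measurableSet_Ioc] with x hx
  exact hC x (Ioc_subset_Icc_self hx)

theorem intervalIntegral.integral_mul_le_Lp_mul_Lq_of_nonneg {f g : ℝ → ℝ} {a b p q : ℝ}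
    (hab : a ≤ b) (hpq : p.HolderConjugate q) (hf : ContinuousOn f (Icc a b))
    (hg : ContinuousOn g (Icc a b)) (hf₀ : ∀ x ∈ Icc a b, 0 ≤ f x)
    (hg₀ : ∀ x ∈ Icc a b, 0 ≤ g x) :
    ∫ x in a..b, f x * g x
      ≤ (∫ x in a..b, f x ^ p) ^ (1 / p) * (∫ x in a..b, g x ^ q) ^ (1 / q) := by
  simp only [integral_of_le hab]
  have nonneg {φ : ℝ → ℝ} (hφ : ∀ x ∈ Icc a b, 0 ≤ φ x) : 0 ≤ᵐ[volume.restrict (Ioc a b)] φ := by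
    filter_upwards [ae_restrict_mem measurableSet_Ioc] with x hx
    exact hφ x (Ioc_subset_Icc_self hx)
  exact MeasureTheory.integral_mul_le_Lp_mul_Lq_of_nonneg hpq (nonneg hf₀) (nonneg hg₀)
    (hf.memLp_restrict_Ioc _) (hg.memLp_restrict_Ioc _)

theorem rpow_add_one_mul_rpow_add_one_of_holderConjugate {h p q X Y : ℝ} (hh : 0 < h)
    (hpq : p.HolderConjugate q) (hX : 0 ≤ X) (hY : 0 ≤ Y) :
    (h ^ (p + 1) * X) ^ (1 / p) * (h ^ (q + 1) * Y) ^ (1 / q)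
      = h ^ 3 * X ^ (1 / p) * Y ^ (1 / q) := by
  have hexp : (p + 1) * (1 / p) + (q + 1) * (1 / q) = 3 := by
    have := hpq.inv_add_inv_eq_one
    field_simp [hpq.ne_zero, hpq.symm.ne_zero] at this ⊢
    linarith
  rw [mul_rpow (by positivity) hX, mul_rpow (by positivity) hY, ← rpow_mul hh.le,
    ← rpow_mul hh.le]
  calc h ^ ((p + 1) * (1 / p)) * X ^ (1 / p) * (h ^ ((q + 1) * (1 / q)) * Y ^ (1 / q))
      = h ^ ((p + 1) * (1 / p) + (q + 1) * (1 / q)) * X ^ (1 / p) * Y ^ (1 / q) := by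
        rw [rpow_add hh]; ring
    _ = h ^ 3 * X ^ (1 / p) * Y ^ (1 / q) := by rw [hexp]; norm_cast

theorem integral_rpow_mul_secant_eq {h q m M : ℝ} (hh : 0 < h) (hq : 0 < q) :
    ∫ t in 0..h, (m * t ^ q + (M - m) / (2 * h) * t ^ (q + 1))
      = h ^ (q + 1) * (1 / (2 * (q + 2)) * (M + (q + 3) / (q + 1) * m)) := by
  have hint (r : ℝ) (hr : 0 < r) : IntervalIntegrable (fun t : ℝ ↦ t ^ r) volume 0 h :=
    intervalIntegral.intervalIntegrable_rpow' (by linarith)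
  rw [integral_add ((hint q hq).const_mul _) ((hint (q + 1) (by linarith)).const_mul _),
    intervalIntegral.integral_const_mul, intervalIntegral.integral_const_mul,
    integral_rpow (Or.inl (by linarith)), integral_rpow (Or.inl (by linarith)),
    zero_rpow (by linarith), zero_rpow (by linarith), rpow_add_one hh.ne' (q + 1)]
  field_simp
  ring

theorem integral_sq_mul_le_of_rpow_le_secant {g : ℝ → ℝ} {h p q m M : ℝ} (hh : 0 < h)
    (hpq : p.HolderConjugate q) (hg : ContinuousOn g (Icc 0 h)) (hg₀ : ∀ t ∈ Icc 0 h, 0 ≤ g t)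
    (hgq : ∀ t ∈ Icc 0 h, g t ^ q ≤ ((2 * h - t) * m + t * M) / (2 * h)) :
    ∫ t in 0..h, t ^ 2 * g t ≤ h ^ 3 * (1 / (p + 1)) ^ (1 / p) * (1 / (2 * (q + 2))) ^ (1 / q)
      * (M + (q + 3) / (q + 1) * m) ^ (1 / q) := by
  have hp := hpq.pos
  have hq := hpq.symm.pos
  have hholder := integral_mul_le_Lp_mul_Lq_of_nonneg (f := fun t ↦ t) (g := fun t ↦ t * g t)
    hh.le hpq continuousOn_id (continuousOn_id.mul hg) (fun t ht ↦ ht.1)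
    (fun t ht ↦ mul_nonneg ht.1 (hg₀ t ht))
  have hP : ∫ t in 0..h, t ^ p = h ^ (p + 1) * (1 / (p + 1)) := by
    rw [integral_rpow (Or.inl (by linarith)), zero_rpow (by linarith)]
    ring
  have hpt : ∀ t ∈ Icc 0 h, (t * g t) ^ q ≤ m * t ^ q + (M - m) / (2 * h) * t ^ (q + 1) := by
    intro t ht
    rw [mul_rpow ht.1 (hg₀ t ht), rpow_add_one' ht.1 (by linarith)]
    calc t ^ q * g t ^ q ≤ t ^ q * (((2 * h - t) * m + t * M) / (2 * h)) :=
          mul_le_mul_of_nonneg_left (hgq t ht) (rpow_nonneg ht.1 q)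
      _ = m * t ^ q + (M - m) / (2 * h) * (t ^ q * t) := by field_simp; ring
  have hQ : ∫ t in 0..h, (t * g t) ^ q
      ≤ h ^ (q + 1) * (1 / (2 * (q + 2)) * (M + (q + 3) / (q + 1) * m)) := by
    rw [← integral_rpow_mul_secant_eq hh hq]
    refine integral_mono_on hh.le ?_ ?_ hpt
    · exact ((continuousOn_id.mul hg).rpow_const fun _ _ ↦ Or.inr hq.le).intervalIntegrable_of_Icc
        hh.le
    · exact (((continuous_rpow_const hq.le).const_mul m).add
        ((continuous_rpow_const (by linarith)).const_mul _)).intervalIntegrable 0 h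
  have hQ₀ : 0 ≤ ∫ t in 0..h, (t * g t) ^ q :=
    integral_nonneg hh.le fun t ht ↦ rpow_nonneg (mul_nonneg ht.1 (hg₀ t ht)) q
  have hK : 0 ≤ 1 / (2 * (q + 2)) * (M + (q + 3) / (q + 1) * m) :=
    (mul_nonneg_iff_of_pos_left (by positivity)).1 (hQ₀.trans hQ)
  calc ∫ t in 0..h, t ^ 2 * g t = ∫ t in 0..h, t * (t * g t) := by
        congr 1; ext t; ring
    _ ≤ (h ^ (p + 1) * (1 / (p + 1))) ^ (1 / p)
          * (h ^ (q + 1) * (1 / (2 * (q + 2)) * (M + (q + 3) / (q + 1) * m))) ^ (1 / q) := by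
        refine hholder.trans ?_
        rw [hP]
        gcongr
    _ = h ^ 3 * (1 / (p + 1)) ^ (1 / p) * (1 / (2 * (q + 2))) ^ (1 / q)
          * (M + (q + 3) / (q + 1) * m) ^ (1 / q) := by
        rw [rpow_add_one_mul_rpow_add_one_of_holderConjugate hh hpq (by positivity) hK,
          mul_rpow (by positivity) ((mul_nonneg_iff_of_pos_left (by positivity)).1 hK)]
        ring

theorem stmt_18_general (a b p q : ℝ) (ha : 0 < a) (hab : a < b)
    (hp : 1 < p) (hpq : 1/p + 1/q = 1) :
    |Real.log ((a+b)/2) - ((b * Real.log b - a * Real.log a)/(b-a) - 1)|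
    ≤ (b-a)^2/16 * (1/(p+1)) ^ (1/p) * (1/(2*(q+2))) ^ (1/q) *
      ((b ^ (-(2*q)) + ((q+3)/(q+1)) * a ^ (-(2*q))) ^ (1/q)
        + (((q+3)/(q+1)) * b ^ (-(2*q)) + a ^ (-(2*q))) ^ (1/q)) := by
  have hpq' : p.HolderConjugate q :=
    Real.holderConjugate_iff.2 ⟨hp, by simpa only [one_div] using hpq⟩
  have hh : 0 < (b - a) / 2 := by linarith
  have hconv := convexOn_rpow_neg (s := 2 * q) (by linarith [hpq'.symm.lt])
  have hpos : ∀ t ∈ Icc 0 ((b - a) / 2), 0 < a + t ∧ 0 < b - t := fun t ht ↦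
    ⟨by linarith [ht.1], by linarith [ht.2]⟩
  have hleft := integral_sq_mul_le_of_rpow_le_secant (g := fun t ↦ ((a + t) ^ 2)⁻¹)
    (m := a ^ (-(2 * q))) (M := b ^ (-(2 * q))) hh hpq'
    ((continuousOn_const.add continuousOn_id).pow 2 |>.inv₀
      fun t ht ↦ (pow_pos (hpos t ht).1 2).ne')
    (fun t ht ↦ by positivity) fun t ht ↦ by
      rw [inv_sq_rpow (hpos t ht).1.le]
      refine (hconv.le_secant ha (ha.trans hab) hab
        ⟨by linarith [ht.1], by linarith [ht.2]⟩).trans_eq ?_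
      ring
  have hright := integral_sq_mul_le_of_rpow_le_secant (g := fun t ↦ ((b - t) ^ 2)⁻¹)
    (m := b ^ (-(2 * q))) (M := a ^ (-(2 * q))) hh hpq'
    ((continuousOn_const.sub continuousOn_id).pow 2 |>.inv₀
      fun t ht ↦ (pow_pos (hpos t ht).2 2).ne')
    (fun t ht ↦ by positivity) fun t ht ↦ by
      rw [inv_sq_rpow (hpos t ht).2.le]
      refine (hconv.le_secant ha (ha.trans hab) hab
        ⟨by linarith [ht.2], by linarith [ht.1]⟩).trans_eq ?_
      ring
  have hnonneg {f : ℝ → ℝ} (hf : ∀ t, 0 ≤ t ^ 2 * f t) :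
      0 ≤ ∫ t in 0..(b - a) / 2, t ^ 2 * f t :=
    integral_nonneg hh.le fun t _ ↦ hf t
  rw [log_mean_sub_log_identric_eq ha hab, abs_of_nonneg (div_nonneg
      (add_nonneg (hnonneg fun t ↦ by positivity) (hnonneg fun t ↦ by positivity)) (by linarith)),
    div_le_iff₀ (by linarith)]
  refine (add_le_add hleft hright).trans_eq ?_
  rw [add_comm (a ^ _)]
  ring

theorem stmt_18 (a b p q : ℝ) (ha : 0 < a) (hab : a < b)
    (hp : 1 < p) (hq : 1 < q) (hpq : 1/p + 1/q = 1) :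
    |Real.log ((a+b)/2) - ((b * Real.log b - a * Real.log a)/(b-a) - 1)|
    ≤ (b-a)^2/16 * (1/(p+1)) ^ (1/p) * (1/(2*(q+2))) ^ (1/q) *
      ((b ^ (-(2*q)) + ((q+3)/(q+1)) * a ^ (-(2*q))) ^ (1/q)
        + (((q+3)/(q+1)) * b ^ (-(2*q)) + a ^ (-(2*q))) ^ (1/q)) :=
  stmt_18_general a b p q ha hab hp hpq
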